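/- arXiv:1603.00285 — 2 statements merged into one kernel-verified Lean document; each statement's English description precedes it below -/
import Mathlib

section
/- Assume the dHSIC setting. Then $\operatorname{dHSIC} = \mathbb{E}\left(\prod_{j=1}^d k^j(X^j_1,X^j_2)\right) + \mathbb{E}\left(\prod_{j=1}^d k^j(X^j_{2j-1},X^j_{2j})\right) - 2\,\mathbb{E}\left(\prod_{j=1}^d k^j(X^j_1,X^j_{j+1})\right)$, where $\mathbf{X}_1,\mathbf{X}_2,\dots$ are iid copies of $\mathbf{X}=(X^1,\dots,X^d)$. -/
open MeasureTheory ProbabilityTheory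

/-!
Expanding the square, `dHSIC = ‖m_ν‖² - 2⟪m_μ, m_ν⟫ + ‖m_μ‖²`, where `m_α = ∫ φ dα` is the
mean embedding and `ν` is the product of the marginals of `μ`. For independent random elements
`A ~ α` and `B ~ β`, bilinearity of the inner product and Fubini give
`⟪m_α, m_β⟫ = E ⟪φ A, φ B⟫ = E κ(A, B)`. Picking coordinate `j` from sample `a j` for an injective
`a` yields a vector of law `ν`, and two such vectors built from disjoint sets of samples are
independent; the pairs `(X₁, X₂)`, `((X^j_{2j-1})_j, (X^j_{2j})_j)` and `(X₁, (X^j_{j+1})_j)`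
therefore realise the three inner products.
-/

section InnerIndep

variable {Ω S T H : Type*} [MeasurableSpace Ω] [MeasurableSpace S] [MeasurableSpace T]
  [NormedAddCommGroup H] [InnerProductSpace ℝ H] [CompleteSpace H] {P : Measure Ω}

theorem ProbabilityTheory.IndepFun.integral_inner_comp_comp {A : Ω → S} {B : Ω → T}
    {f : S → H} {g : T → H} (hAB : IndepFun A B P) (hA : AEMeasurable A P) (hB : AEMeasurable B P)
    (hf : Integrable f (P.map A)) (hg : Integrable g (P.map B)) :
    ∫ ω, inner ℝ (f (A ω)) (g (B ω)) ∂P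
      = inner ℝ (∫ x, f x ∂(P.map A)) (∫ y, g y ∂(P.map B)) := by
  rw [integral_map hA hf.1, integral_map hB hg.1]
  exact hAB.integral_bilin_comp_comp hA hB hf hg (innerSL ℝ)

end InnerIndep

section DiagonalSample

variable {d : ℕ} {X : Fin d → Type*} [∀ j, MeasurableSpace (X j)]
  {Ω : Type*} [MeasurableSpace Ω] {P : Measure Ω} {Xs : ℕ → Ω → ∀ j, X j}

/-- `(X^1_{a 1}, …, X^d_{a d})` in the notation of the paper. -/
def diagSample (Xs : ℕ → Ω → ∀ j, X j) (a : Fin d → ℕ) (ω : Ω) : ∀ j, X j :=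
  fun j => Xs (a j) ω j

theorem measurable_diagSample (hmeas : ∀ i, Measurable (Xs i)) (a : Fin d → ℕ) :
    Measurable (diagSample Xs a) :=
  measurable_pi_lambda _ fun j => (measurable_pi_apply j).comp (hmeas (a j))

theorem indepFun_diagSample (hmeas : ∀ i, Measurable (Xs i)) (hindep : iIndepFun Xs P)
    {a b : Fin d → ℕ} (hab : ∀ i j, a i ≠ b j) :
    IndepFun (diagSample Xs a) (diagSample Xs b) P := by
  classical
  have hdisj : Disjoint (Finset.univ.image a) (Finset.univ.image b) := by
    simp only [Finset.disjoint_left, Finset.mem_image, Finset.mem_univ, true_and]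
    rintro _ ⟨i, rfl⟩ ⟨j, hj⟩
    exact hab i j hj.symm
  refine (hindep.indepFun_finset _ _ hdisj hmeas).comp
    (φ := fun v j => v ⟨a j, Finset.mem_image_of_mem a (Finset.mem_univ j)⟩ j)
    (ψ := fun v j => v ⟨b j, Finset.mem_image_of_mem b (Finset.mem_univ j)⟩ j) ?_ ?_ <;> fun_prop

theorem map_diagSample_of_injective (hmeas : ∀ i, Measurable (Xs i)) (hindep : iIndepFun Xs P)
    {μ : Measure (∀ j, X j)} (hlaw : ∀ i, P.map (Xs i) = μ)
    {a : Fin d → ℕ} (ha : Function.Injective a) :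
    P.map (diagSample Xs a) = Measure.pi fun j => μ.map fun x => x j := by
  have hcoord : iIndepFun (fun j ω => Xs (a j) ω j) P :=
    (hindep.precomp ha).comp (fun j x => x j) fun j => measurable_pi_apply j
  have hmarginal : ∀ j, P.map (fun ω => Xs (a j) ω j) = μ.map fun x => x j := fun j => by
    rw [← hlaw (a j), Measure.map_map (measurable_pi_apply j) (hmeas (a j))]
    rfl
  calc P.map (diagSample Xs a) = Measure.pi fun j => P.map fun ω => Xs (a j) ω j :=
        hcoord.map_fun_eq_pi_map fun j => ((measurable_pi_apply j).comp (hmeas _)).aemeasurable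
    _ = _ := by simp_rw [hmarginal]

theorem integral_kernel_diagSample {H : Type*} [NormedAddCommGroup H] [InnerProductSpace ℝ H]
    [CompleteSpace H] {κ : (∀ j, X j) → (∀ j, X j) → ℝ} {φ : (∀ j, X j) → H}
    (hφ : ∀ x y, inner ℝ (φ x) (φ y) = κ x y)
    (hmeas : ∀ i, Measurable (Xs i)) (hindep : iIndepFun Xs P)
    {a b : Fin d → ℕ} (hab : ∀ i j, a i ≠ b j) {α β : Measure (∀ j, X j)}
    (ha : P.map (diagSample Xs a) = α) (hb : P.map (diagSample Xs b) = β)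
    (hα : Integrable φ α) (hβ : Integrable φ β) :
    ∫ ω, κ (diagSample Xs a ω) (diagSample Xs b ω) ∂P
      = inner ℝ (∫ x, φ x ∂α) (∫ x, φ x ∂β) := by
  subst ha hb
  simp only [← hφ]
  exact (indepFun_diagSample hmeas hindep hab).integral_inner_comp_comp
    (measurable_diagSample hmeas a).aemeasurable (measurable_diagSample hmeas b).aemeasurable hα hβ

end DiagonalSample

theorem dHSIC_kernel_expansion_general
    {d : ℕ} {X : Fin d → Type*} [∀ j, MeasurableSpace (X j)]
    {H : Type*} [NormedAddCommGroup H] [InnerProductSpace ℝ H] [CompleteSpace H]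
    -- the kernels and a feature map of the tensor-product kernel
    (k : ∀ j, X j → X j → ℝ)
    (φ : (∀ j, X j) → H)
    (hfeature : ∀ x y, (inner ℝ (φ x) (φ y) : ℝ) = ∏ j, k j (x j) (y j))
    -- an iid sequence with law μ
    {Ω : Type*} [MeasurableSpace Ω] (P : Measure Ω)
    (Xs : ℕ → Ω → (∀ j, X j))
    (hmeas : ∀ i, Measurable (Xs i))
    (hindep : iIndepFun Xs P)
    (μ : Measure (∀ j, X j))
    (hlaw : ∀ i, Measure.map (Xs i) P = μ)
    -- Bochner integrability of the feature map (kernels continuous and bounded)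
    (hint1 : Integrable φ μ)
    (hint2 : Integrable φ (Measure.pi fun j => μ.map fun x => x j)) :
    ‖(∫ x, φ x ∂(Measure.pi fun j => μ.map fun x => x j)) - ∫ x, φ x ∂μ‖ ^ 2
      = (∫ ω, ∏ j, k j (Xs 0 ω j) (Xs 1 ω j) ∂P)
        + (∫ ω, ∏ j, k j (Xs (2 * (j : ℕ)) ω j) (Xs (2 * (j : ℕ) + 1) ω j) ∂P)
        - 2 * ∫ ω, ∏ j, k j (Xs 0 ω j) (Xs ((j : ℕ) + 1) ω j) ∂P := by
  set ν := Measure.pi fun j => μ.map fun x : (∀ j, X j) => x j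
  have hlaw_diag : ∀ a : Fin d → ℕ, Function.Injective a → P.map (diagSample Xs a) = ν :=
    fun a ha => map_diagSample_of_injective hmeas hindep hlaw ha
  have h₁ : ∫ ω, ∏ j, k j (Xs 0 ω j) (Xs 1 ω j) ∂P
      = inner ℝ (∫ x, φ x ∂μ) (∫ x, φ x ∂μ) :=
    integral_kernel_diagSample hfeature hmeas hindep (a := fun _ => 0) (b := fun _ => 1)
      (fun _ _ => zero_ne_one) (hlaw 0) (hlaw 1) hint1 hint1
  have h₂ : ∫ ω, ∏ j, k j (Xs (2 * (j : ℕ)) ω j) (Xs (2 * (j : ℕ) + 1) ω j) ∂P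
      = inner ℝ (∫ x, φ x ∂ν) (∫ x, φ x ∂ν) :=
    integral_kernel_diagSample hfeature hmeas hindep (fun _ _ => by omega)
      (hlaw_diag _ fun i j h => Fin.ext (by omega)) (hlaw_diag _ fun i j h => Fin.ext (by omega))
      hint2 hint2
  have h₃ : ∫ ω, ∏ j, k j (Xs 0 ω j) (Xs ((j : ℕ) + 1) ω j) ∂P
      = inner ℝ (∫ x, φ x ∂μ) (∫ x, φ x ∂ν) :=
    integral_kernel_diagSample hfeature hmeas hindep (a := fun _ => 0) (fun _ _ => by omega)
      (hlaw 0) (hlaw_diag _ fun i j h => Fin.ext (by omega)) hint1 hint2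
  rw [h₁, h₂, h₃, norm_sub_sq_real, real_inner_self_eq_norm_sq, real_inner_self_eq_norm_sq,
    real_inner_comm]
  ring

theorem dHSIC_kernel_expansion
    {d : ℕ} {X : Fin d → Type*} [∀ j, MeasurableSpace (X j)]
    {H : Type*} [NormedAddCommGroup H] [InnerProductSpace ℝ H] [CompleteSpace H]
    -- the kernels and a feature map of the tensor-product kernel
    (k : ∀ j, X j → X j → ℝ)
    (φ : (∀ j, X j) → H)
    (hfeature : ∀ x y, (inner ℝ (φ x) (φ y) : ℝ) = ∏ j, k j (x j) (y j))
    -- an iid sequence with law μ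
    {Ω : Type*} [MeasurableSpace Ω] (P : Measure Ω) [IsProbabilityMeasure P]
    (Xs : ℕ → Ω → (∀ j, X j))
    (hmeas : ∀ i, Measurable (Xs i))
    (hindep : iIndepFun Xs P)
    (μ : Measure (∀ j, X j)) [IsProbabilityMeasure μ]
    (hlaw : ∀ i, Measure.map (Xs i) P = μ)
    -- Bochner integrability of the feature map (kernels continuous and bounded)
    (hint1 : Integrable φ μ)
    (hint2 : Integrable φ (Measure.pi fun j => μ.map fun x => x j)) :
    ‖(∫ x, φ x ∂(Measure.pi fun j => μ.map fun x => x j)) - ∫ x, φ x ∂μ‖ ^ 2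
      = (∫ ω, ∏ j, k j (Xs 0 ω j) (Xs 1 ω j) ∂P)
        + (∫ ω, ∏ j, k j (Xs (2 * (j : ℕ)) ω j) (Xs (2 * (j : ℕ) + 1) ω j) ∂P)
        - 2 * ∫ ω, ∏ j, k j (Xs 0 ω j) (Xs ((j : ℕ) + 1) ω j) ∂P :=
  dHSIC_kernel_expansion_general k φ hfeature P Xs hmeas hindep μ hlaw hint1 hint2
end

section
/- Define $h:\mathcal{X}^{2d}\to\mathbb{R}$ by symmetrizing over all permutations $\pi \in S_{2d}$ of the three kernel-product terms of dHSIC. Then $h$ is symmetric, and if each kernel $k^j$ is continuous and bounded, $h$ is continuous and bounded; moreover $\mathbb{E}[h(\mathbf{X}_1,\dots,\mathbf{X}_{2d})] = \operatorname{dHSIC}$ and the V-statistic $V_n(h)$ equals $\widehat{\operatorname{dHSIC}}_n$. -/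
open MeasureTheory ProbabilityTheory

/-- The symmetrized dHSIC core function `h` of degree `2(d+1)` (for `d+1` variables). -/
noncomputable def dhsicCore (d : ℕ) {X : Fin (d + 1) → Type*}
    (k : ∀ j, X j → X j → ℝ)
    (z : Fin (2 * (d + 1)) → ∀ j, X j) : ℝ :=
  (((2 * (d + 1)).factorial : ℝ))⁻¹ *
    ∑ π : Equiv.Perm (Fin (2 * (d + 1))),
      ((∏ j, k j (z (π ⟨0, by omega⟩) j) (z (π ⟨1, by omega⟩) j))
        + (∏ j, k j (z (π ⟨2 * (j : ℕ), by have := j.isLt; omega⟩) j)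
            (z (π ⟨2 * (j : ℕ) + 1, by have := j.isLt; omega⟩) j))
        - 2 * ∏ j, k j (z (π ⟨0, by omega⟩) j)
            (z (π ⟨(j : ℕ) + 1, by have := j.isLt; omega⟩) j))

/-- The dHSIC V-estimator for `d+1` variables on a sample of size `n`. -/
noncomputable def dhsicEstimator (d n : ℕ) {X : Fin (d + 1) → Type*}
    (k : ∀ j, X j → X j → ℝ) (x : Fin n → ∀ j, X j) : ℝ :=
  ((n : ℝ) ^ 2)⁻¹ * (∑ f : Fin 2 → Fin n, ∏ j, k j (x (f 0) j) (x (f 1) j))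
    + ((n : ℝ) ^ (2 * (d + 1)))⁻¹ *
      (∑ f : Fin (2 * (d + 1)) → Fin n, ∏ j,
        k j (x (f ⟨2 * (j : ℕ), by have := j.isLt; omega⟩)  j)
          (x (f ⟨2 * (j : ℕ) + 1, by have := j.isLt; omega⟩) j))
    - 2 * ((n : ℝ) ^ (d + 2))⁻¹ *
      (∑ f : Fin (d + 2) → Fin n, ∏ j,
        k j (x (f 0) j) (x (f ⟨(j : ℕ) + 1, by have := j.isLt; omega⟩) j))

/-!
`dhsicCore` is the permutation average of the raw kernel
`g z = k(z₀, z₁) + k(z_even, z_odd) - 2 k(z₀, z_succ)` (tensor-product kernels), so symmetry,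
continuity and boundedness come for free. On distinct sample points each tensor-kernel term is
`⟪φ U, φ V⟫` for independent `U`, `V`, whose mean is the inner product of the mean embeddings of
their laws (`μ`, or the product of its marginals); expanding `‖m_⊗ - m‖²` gives the expectation.
Averaging over all index maps absorbs the permutation average, and a kernel that reads only its
first `r` arguments has the same V-statistic as its restriction to degree `r`, which turns the
V-statistic into the three normalised sums of the estimator.
-/

section Symmetrize

variable {α : Type*} {m : ℕ}

noncomputable def symmetrize (g : (Fin m → α) → ℝ) (z : Fin m → α) : ℝ :=
  (m.factorial : ℝ)⁻¹ * ∑ π : Equiv.Perm (Fin m), g (z ∘ π)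

lemma symmetrize_comp_perm (g : (Fin m → α) → ℝ) (σ : Equiv.Perm (Fin m)) (z : Fin m → α) :
    symmetrize g (z ∘ σ) = symmetrize g z := by
  unfold symmetrize
  congr 1
  exact Fintype.sum_equiv (Equiv.mulLeft σ) _ _ fun π => rfl

lemma abs_symmetrize_le {g : (Fin m → α) → ℝ} {C : ℝ} (hg : ∀ z, |g z| ≤ C) (z : Fin m → α) :
    |symmetrize g z| ≤ C := by
  have hfac : (0 : ℝ) < m.factorial := by exact_mod_cast Nat.factorial_pos m
  rw [symmetrize, abs_mul, abs_inv, Nat.abs_cast, inv_mul_le_iff₀ hfac]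
  calc |∑ π : Equiv.Perm (Fin m), g (z ∘ π)| ≤ ∑ π : Equiv.Perm (Fin m), |g (z ∘ π)| :=
        Finset.abs_sum_le_sum_abs _ _
    _ ≤ ∑ _π : Equiv.Perm (Fin m), C := Finset.sum_le_sum fun π _ => hg _
    _ = m.factorial * C := by simp [Fintype.card_perm]

lemma continuous_symmetrize [TopologicalSpace α] {g : (Fin m → α) → ℝ} (hg : Continuous g) :
    Continuous (symmetrize g) :=
  continuous_const.mul <| continuous_finsetSum _ fun π _ =>
    hg.comp <| continuous_pi fun i => continuous_apply (π i)

lemma integral_symmetrize_comp {Ω : Type*} [MeasurableSpace Ω] {P : Measure Ω}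
    {g : (Fin m → α) → ℝ} {Z : Ω → Fin m → α} {c : ℝ}
    (hint : ∀ π : Equiv.Perm (Fin m), Integrable (fun ω => g (Z ω ∘ π)) P)
    (hval : ∀ π : Equiv.Perm (Fin m), ∫ ω, g (Z ω ∘ π) ∂P = c) :
    ∫ ω, symmetrize g (Z ω) ∂P = c := by
  simp only [symmetrize]
  rw [integral_const_mul, integral_finsetSum _ fun π _ => hint π]
  simp [hval, Fintype.card_perm, (Nat.factorial_pos m).ne']

end Symmetrize

section VStatistic

variable {α : Type*} {m n : ℕ}

noncomputable def vStatistic (g : (Fin m → α) → ℝ) (x : Fin n → α) : ℝ :=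
  ((n : ℝ) ^ m)⁻¹ * ∑ f : Fin m → Fin n, g (x ∘ f)

lemma vStatistic_symmetrize (g : (Fin m → α) → ℝ) (x : Fin n → α) :
    vStatistic (symmetrize g) x = vStatistic g x := by
  have hperm : ∀ π : Equiv.Perm (Fin m),
      ∑ f : Fin m → Fin n, g (x ∘ f ∘ π) = ∑ f : Fin m → Fin n, g (x ∘ f) := fun π =>
    Fintype.sum_equiv (π.symm.arrowCongr (Equiv.refl _)) _ _ fun f => rfl
  have hfac : (m.factorial : ℝ) ≠ 0 := by exact_mod_cast (Nat.factorial_pos m).ne'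
  simp only [vStatistic, symmetrize, ← Finset.mul_sum]
  rw [Finset.sum_comm]
  simp [Function.comp_assoc, hperm, Fintype.card_perm, hfac]

lemma vStatistic_add_sub_two_mul (g₁ g₂ g₃ : (Fin m → α) → ℝ) (x : Fin n → α) :
    vStatistic (fun w => g₁ w + g₂ w - 2 * g₃ w) x
      = vStatistic g₁ x + vStatistic g₂ x - 2 * vStatistic g₃ x := by
  simp only [vStatistic, Finset.sum_sub_distrib, Finset.sum_add_distrib, ← Finset.mul_sum]
  ring

lemma sum_comp_castLE_add {β : Type*} [AddCommMonoid β] {r s : ℕ} (h : r ≤ r + s)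
    (F : (Fin r → Fin n) → β) :
    ∑ f : Fin (r + s) → Fin n, F (f ∘ Fin.castLE h) = n ^ s • ∑ f : Fin r → Fin n, F f := by
  have happend : ∀ (a : Fin r → Fin n) (b : Fin s → Fin n), Fin.append a b ∘ Fin.castLE h = a :=
    fun a b => funext fun i => Fin.append_left a b i
  rw [← Fintype.sum_equiv (Fin.appendEquiv r s) (fun p => F p.1) _
    fun p => congrArg F (happend p.1 p.2).symm]
  simp [Fintype.sum_prod_type_right, Finset.smul_sum]

lemma vStatistic_comp_castLE {r : ℕ} (hrm : r ≤ m) (hr : 0 < r) (g : (Fin r → α) → ℝ)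
    (x : Fin n → α) :
    vStatistic (fun w => g (w ∘ Fin.castLE hrm)) x = vStatistic g x := by
  obtain ⟨s, rfl⟩ := Nat.exists_eq_add_of_le hrm
  rcases n.eq_zero_or_pos with rfl | hn
  · have : IsEmpty (Fin r → Fin 0) := ⟨fun f => (f ⟨0, hr⟩).elim0⟩
    have : IsEmpty (Fin (r + s) → Fin 0) := ⟨fun f => (f ⟨0, by omega⟩).elim0⟩
    simp [vStatistic]
  · have hn : (n : ℝ) ≠ 0 := by exact_mod_cast hn.ne'
    unfold vStatistic
    refine (congrArg _ (sum_comp_castLE_add hrm fun f => g (x ∘ f))).trans ?_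
    rw [nsmul_eq_mul, pow_add]
    push_cast
    field_simp

end VStatistic

section TensorKernel

variable {ι : Type*} [Fintype ι] {X : ι → Type*}

def tensorKernel (k : ∀ j, X j → X j → ℝ) (x y : ∀ j, X j) : ℝ :=
  ∏ j, k j (x j) (y j)

lemma abs_tensorKernel_le {k : ∀ j, X j → X j → ℝ} {C : ι → ℝ}
    (hC : ∀ j a b, |k j a b| ≤ C j) (x y : ∀ j, X j) :
    |tensorKernel k x y| ≤ ∏ j, C j := by
  rw [tensorKernel, Finset.abs_prod]
  exact Finset.prod_le_prod (fun j _ => abs_nonneg _) fun j _ => hC j _ _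

lemma Continuous.tensorKernel [∀ j, TopologicalSpace (X j)] {Y : Type*} [TopologicalSpace Y]
    {k : ∀ j, X j → X j → ℝ} (hk : ∀ j, Continuous fun p : X j × X j => k j p.1 p.2)
    {u v : Y → ∀ j, X j} (hu : Continuous u) (hv : Continuous v) :
    Continuous fun y => tensorKernel k (u y) (v y) :=
  continuous_finsetProd _ fun j _ =>
    (hk j).comp (((continuous_apply j).comp hu).prodMk ((continuous_apply j).comp hv))

end TensorKernel

section RawCore

variable {d : ℕ} {X : Fin (d + 1) → Type*}

variable (d) in
noncomputable def dhsicRawCore (k : ∀ j, X j → X j → ℝ) (w : Fin (2 * (d + 1)) → ∀ j, X j) :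
    ℝ :=
  tensorKernel k (w ⟨0, by omega⟩) (w ⟨1, by omega⟩)
    + tensorKernel k (fun j => w ⟨2 * j, by omega⟩ j) (fun j => w ⟨2 * j + 1, by omega⟩ j)
    - 2 * tensorKernel k (w ⟨0, by omega⟩) (fun j => w ⟨j + 1, by omega⟩ j)

lemma dhsicCore_eq_symmetrize (k : ∀ j, X j → X j → ℝ) :
    dhsicCore d k = symmetrize (dhsicRawCore d k) :=
  rfl

lemma abs_dhsicRawCore_le {k : ∀ j, X j → X j → ℝ} {C : Fin (d + 1) → ℝ}
    (hC : ∀ j a b, |k j a b| ≤ C j) (w : Fin (2 * (d + 1)) → ∀ j, X j) :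
    |dhsicRawCore d k w| ≤ 4 * ∏ j, C j := by
  have h := abs_tensorKernel_le hC
  unfold dhsicRawCore
  have := abs_add_le (tensorKernel k (w ⟨0, by omega⟩) (w ⟨1, by omega⟩))
    (tensorKernel k (fun j => w ⟨2 * j, by omega⟩ j) (fun j => w ⟨2 * j + 1, by omega⟩ j))
  grind [abs_sub, abs_two]

lemma continuous_dhsicRawCore [∀ j, TopologicalSpace (X j)] {k : ∀ j, X j → X j → ℝ}
    (hk : ∀ j, Continuous fun p : X j × X j => k j p.1 p.2) :
    Continuous (dhsicRawCore d k) := by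
  have hcoord : ∀ a : Fin (d + 1) → Fin (2 * (d + 1)),
      Continuous fun w : Fin (2 * (d + 1)) → ∀ j, X j => fun j => w (a j) j := fun a =>
    continuous_pi fun j => (continuous_apply j).comp (continuous_apply (a j))
  exact ((Continuous.tensorKernel hk (continuous_apply _) (continuous_apply _)).add
    (Continuous.tensorKernel hk (hcoord _) (hcoord _))).sub
    (continuous_const.mul (Continuous.tensorKernel hk (continuous_apply _) (hcoord _)))

lemma vStatistic_dhsicRawCore {n : ℕ} (k : ∀ j, X j → X j → ℝ) (x : Fin n → ∀ j, X j) :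
    vStatistic (dhsicRawCore d k) x = dhsicEstimator d n k x := by
  have h2 : 2 ≤ 2 * (d + 1) := by omega
  have hd2 : d + 2 ≤ 2 * (d + 1) := by omega
  set A := fun w : Fin 2 → ∀ j, X j => tensorKernel k (w 0) (w 1)
  set C := fun w : Fin (d + 2) → ∀ j, X j => tensorKernel k (w 0) (fun j => w ⟨j + 1, by omega⟩ j)
  refine (vStatistic_add_sub_two_mul (fun w => A (w ∘ Fin.castLE h2)) _
    (fun w => C (w ∘ Fin.castLE hd2)) x).trans ?_
  rw [vStatistic_comp_castLE h2 two_pos, vStatistic_comp_castLE hd2 (by omega), dhsicEstimator,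
    mul_assoc]
  rfl

end RawCore

section InnerProduct

variable {E E' H : Type*} [MeasurableSpace E] [MeasurableSpace E'] [NormedAddCommGroup H]
  [InnerProductSpace ℝ H] {ρ : Measure E} {σ : Measure E'} {φ : E → H} {ψ : E' → H}

lemma integrable_inner_prod [SFinite σ] (hφ : Integrable φ ρ) (hψ : Integrable ψ σ) :
    Integrable (fun p : E × E' => inner ℝ (φ p.1) (ψ p.2)) (ρ.prod σ) :=
  (hφ.norm.mul_prod hψ.norm).mono'
    (hφ.aestronglyMeasurable.comp_fst.inner hψ.aestronglyMeasurable.comp_snd)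
    (Filter.Eventually.of_forall fun _ => norm_inner_le_norm _ _)

lemma integral_inner_prod [SFinite ρ] [SFinite σ] [CompleteSpace H]
    (hφ : Integrable φ ρ) (hψ : Integrable ψ σ) :
    ∫ p : E × E', inner ℝ (φ p.1) (ψ p.2) ∂(ρ.prod σ)
      = inner ℝ (∫ x, φ x ∂ρ) (∫ y, ψ y ∂σ) := by
  rw [integral_prod _ (integrable_inner_prod hφ hψ)]
  dsimp only
  simp_rw [integral_inner hψ, real_inner_comm (∫ y, ψ y ∂σ)]
  rw [integral_inner hφ]

end InnerProduct

namespace ProbabilityTheory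

section

variable {Ω E : Type*} [MeasurableSpace Ω] [MeasurableSpace E] {P : Measure Ω}

lemma IndepFun.integrable_inner_comp_and_integral_eq {H : Type*} [NormedAddCommGroup H]
    [InnerProductSpace ℝ H] [CompleteSpace H] [IsFiniteMeasure P] {φ : E → H} {U V : Ω → E}
    (hU : Measurable U) (hV : Measurable V) (hUV : IndepFun U V P)
    (hφU : Integrable φ (P.map U)) (hφV : Integrable φ (P.map V)) :
    Integrable (fun ω => inner ℝ (φ (U ω)) (φ (V ω))) P ∧
      ∫ ω, inner ℝ (φ (U ω)) (φ (V ω)) ∂P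
        = inner ℝ (∫ x, φ x ∂P.map U) (∫ x, φ x ∂P.map V) := by
  have hpair : AEMeasurable (fun ω => (U ω, V ω)) P := (hU.prodMk hV).aemeasurable
  have hmap : P.map (fun ω => (U ω, V ω)) = (P.map U).prod (P.map V) :=
    (indepFun_iff_map_prod_eq_prod_map_map hU.aemeasurable hV.aemeasurable).mp hUV
  have hint := integrable_inner_prod hφU hφV
  rw [← hmap] at hint
  refine ⟨(integrable_map_measure hint.aestronglyMeasurable hpair).mp hint, ?_⟩
  rw [← integral_map hpair hint.aestronglyMeasurable, hmap, integral_inner_prod hφU hφV]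

variable {ι : Type*} {Xs : ι → Ω → E}

lemma iIndepFun.indepFun_of_disjoint {κ₀ κ₁ : Type*} [Fintype κ₀] [Fintype κ₁]
    (hindep : iIndepFun Xs P) (hmeas : ∀ i, Measurable (Xs i)) {c₀ : κ₀ → ι} {c₁ : κ₁ → ι}
    (hdisj : ∀ t t', c₀ t ≠ c₁ t') :
    IndepFun (fun ω t => Xs (c₀ t) ω) (fun ω t => Xs (c₁ t) ω) P := by
  classical
  have hST : Disjoint (Finset.univ.image c₀) (Finset.univ.image c₁) := by
    simp only [Finset.disjoint_left, Finset.mem_image, Finset.mem_univ, true_and]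
    rintro _ ⟨t, rfl⟩ ⟨t', ht'⟩
    exact hdisj t t' ht'.symm
  exact (hindep.indepFun_finset _ _ hST hmeas).comp
    (φ := fun w t => w ⟨c₀ t, Finset.mem_image_of_mem c₀ (Finset.mem_univ t)⟩)
    (ψ := fun w t => w ⟨c₁ t, Finset.mem_image_of_mem c₁ (Finset.mem_univ t)⟩)
    (by fun_prop) (by fun_prop)

lemma iIndepFun.map_comp_eq_pi {κ : Type*} [Fintype κ] (hindep : iIndepFun Xs P)
    (hmeas : ∀ i, Measurable (Xs i)) {μ : Measure E} (hlaw : ∀ i, P.map (Xs i) = μ)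
    {c : κ → ι} (hc : Function.Injective c) :
    P.map (fun ω t => Xs (c t) ω) = Measure.pi fun _ => μ := by
  have := hindep.isProbabilityMeasure
  rw [(hindep.precomp hc).map_fun_eq_pi_map fun t => (hmeas (c t)).aemeasurable]
  simp only [hlaw]

end

section

variable {ι κ : Type*} [Fintype ι] {X : ι → Type*} [∀ j, MeasurableSpace (X j)]
  {Ω : Type*} [MeasurableSpace Ω] {P : Measure Ω} {Xs : κ → Ω → ∀ j, X j}

lemma iIndepFun.map_diag_eq_pi_map_eval (hindep : iIndepFun Xs P)
    (hmeas : ∀ i, Measurable (Xs i)) {μ : Measure (∀ j, X j)} [IsProbabilityMeasure μ]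
    (hlaw : ∀ i, P.map (Xs i) = μ) {c : ι → κ} (hc : Function.Injective c) :
    P.map (fun ω j => Xs (c j) ω j) = Measure.pi fun j => μ.map fun x => x j := by
  have hdiag : Measurable fun (w : ι → ∀ j, X j) j => w j j := by fun_prop
  refine (Measure.map_map hdiag (measurable_pi_lambda _ fun t => hmeas (c t))).symm.trans ?_
  rw [hindep.map_comp_eq_pi hmeas hlaw hc]
  exact Measure.pi_map_pi fun j => (measurable_pi_apply j).aemeasurable

lemma iIndepFun.integrable_tensorKernel_and_integral_eq {k : ∀ j, X j → X j → ℝ}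
    {H : Type*} [NormedAddCommGroup H] [InnerProductSpace ℝ H] [CompleteSpace H]
    {φ : (∀ j, X j) → H} (hfeature : ∀ x y, inner ℝ (φ x) (φ y) = tensorKernel k x y)
    (hindep : iIndepFun Xs P) (hmeas : ∀ i, Measurable (Xs i)) {c₀ c₁ : ι → κ}
    (hdisj : ∀ t t', c₀ t ≠ c₁ t')
    (h₀ : Integrable φ (P.map fun ω j => Xs (c₀ j) ω j))
    (h₁ : Integrable φ (P.map fun ω j => Xs (c₁ j) ω j)) :
    Integrable (fun ω => tensorKernel k (fun j => Xs (c₀ j) ω j) (fun j => Xs (c₁ j) ω j)) P ∧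
      ∫ ω, tensorKernel k (fun j => Xs (c₀ j) ω j) (fun j => Xs (c₁ j) ω j) ∂P
        = inner ℝ (∫ x, φ x ∂P.map fun ω j => Xs (c₀ j) ω j)
            (∫ x, φ x ∂P.map fun ω j => Xs (c₁ j) ω j) := by
  have := hindep.isProbabilityMeasure
  have hdiag : Measurable fun (w : ι → ∀ j, X j) j => w j j := by fun_prop
  have key := IndepFun.integrable_inner_comp_and_integral_eq
    (U := fun ω j => Xs (c₀ j) ω j) (V := fun ω j => Xs (c₁ j) ω j)
    (hdiag.comp (measurable_pi_lambda _ fun t => hmeas (c₀ t)))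
    (hdiag.comp (measurable_pi_lambda _ fun t => hmeas (c₁ t)))
    ((hindep.indepFun_of_disjoint hmeas hdisj).comp hdiag hdiag) h₀ h₁
  simpa only [hfeature] using key

end

end ProbabilityTheory

section Expectation

variable {d : ℕ} {X : Fin (d + 1) → Type*} [∀ j, MeasurableSpace (X j)]
  {k : ∀ j, X j → X j → ℝ} {H : Type*} [NormedAddCommGroup H] [InnerProductSpace ℝ H]
  [CompleteSpace H] {φ : (∀ j, X j) → H} {Ω : Type*} [MeasurableSpace Ω] {P : Measure Ω}
  {Xs : ℕ → Ω → ∀ j, X j} {μ : Measure (∀ j, X j)} [IsProbabilityMeasure μ]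

/- Each kernel product in `dhsicRawCore` pairs two disjoint groups of sample points, so by
independence its mean is the inner product of the mean embeddings of the two groups' laws:
`μ` for a single point, the product of the marginals of `μ` for `d + 1` distinct points. -/
lemma integrable_dhsicRawCore_and_integral_eq
    (hfeature : ∀ x y, inner ℝ (φ x) (φ y) = tensorKernel k x y)
    (hindep : iIndepFun Xs P) (hmeas : ∀ i, Measurable (Xs i)) (hlaw : ∀ i, P.map (Xs i) = μ)
    (hint1 : Integrable φ μ) (hint2 : Integrable φ (Measure.pi fun j => μ.map fun x => x j))
    (π : Equiv.Perm (Fin (2 * (d + 1)))) :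
    Integrable (fun ω => dhsicRawCore d k ((fun i : Fin (2 * (d + 1)) => Xs i ω) ∘ π)) P ∧
      ∫ ω, dhsicRawCore d k ((fun i : Fin (2 * (d + 1)) => Xs i ω) ∘ π) ∂P
        = ‖(∫ x, φ x ∂(Measure.pi fun j => μ.map fun x => x j)) - ∫ x, φ x ∂μ‖ ^ 2 := by
  set ν := Measure.pi fun j => μ.map fun x => x j
  have hne {a b : Fin (2 * (d + 1))} (hab : (a : ℕ) ≠ b) : (π a : ℕ) ≠ π b :=
    fun h => hab (congrArg Fin.val (π.injective (Fin.ext h)))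
  have hlawν {a : Fin (d + 1) → Fin (2 * (d + 1))} (ha : Function.Injective a) :
      P.map (fun ω j => Xs (π (a j)) ω j) = ν :=
    hindep.map_diag_eq_pi_map_eval hmeas hlaw (Fin.val_injective.comp (π.injective.comp ha))
  have heven : Function.Injective fun j : Fin (d + 1) => (⟨2 * j, by omega⟩ : Fin (2 * (d + 1))) :=
    fun i j h => Fin.ext (by simp only [Fin.mk.injEq] at h; omega)
  have hodd : Function.Injective
      fun j : Fin (d + 1) => (⟨2 * j + 1, by omega⟩ : Fin (2 * (d + 1))) :=
    fun i j h => Fin.ext (by simp only [Fin.mk.injEq] at h; omega)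
  have hsucc : Function.Injective
      fun j : Fin (d + 1) => (⟨j + 1, by omega⟩ : Fin (2 * (d + 1))) :=
    fun i j h => Fin.ext (by simp only [Fin.mk.injEq] at h; omega)
  obtain ⟨iA, vA⟩ := hindep.integrable_tensorKernel_and_integral_eq hfeature hmeas
    (c₀ := fun _ => π ⟨0, by omega⟩) (c₁ := fun _ => π ⟨1, by omega⟩)
    (fun _ _ => hne (by simp)) (hlaw _ ▸ hint1) (hlaw _ ▸ hint1)
  obtain ⟨iB, vB⟩ := hindep.integrable_tensorKernel_and_integral_eq hfeature hmeas
    (c₀ := fun j => π ⟨2 * j, by omega⟩) (c₁ := fun j => π ⟨2 * j + 1, by omega⟩)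
    (fun _ _ => hne (by simp only; omega)) (hlawν heven ▸ hint2) (hlawν hodd ▸ hint2)
  obtain ⟨iC, vC⟩ := hindep.integrable_tensorKernel_and_integral_eq hfeature hmeas
    (c₀ := fun _ => π ⟨0, by omega⟩) (c₁ := fun j => π ⟨j + 1, by omega⟩)
    (fun _ _ => hne (by simp only; omega)) (hlaw _ ▸ hint1) (hlawν hsucc ▸ hint2)
  refine ⟨(iA.add iB).sub (iC.const_mul 2), ?_⟩
  refine (integral_sub (iA.add iB) (iC.const_mul 2)).trans ?_
  rw [integral_add' iA iB, integral_const_mul, vA, vB, vC, hlaw, hlaw, hlawν heven, hlawν hodd,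
    hlawν hsucc, norm_sub_sq_real, ← real_inner_self_eq_norm_sq, ← real_inner_self_eq_norm_sq,
    real_inner_comm (∫ x, φ x ∂μ) (∫ x, φ x ∂ν)]
  ring

end Expectation

theorem dhsicCore_properties_general
    {d : ℕ} {X : Fin (d + 1) → Type*}
    [∀ j, MeasurableSpace (X j)] [∀ j, TopologicalSpace (X j)]
    (k : ∀ j, X j → X j → ℝ)
    (hkcont : ∀ j, Continuous (fun p : X j × X j => k j p.1 p.2))
    (hkbdd : ∀ j, ∃ C : ℝ, ∀ a b, |k j a b| ≤ C)
    -- a feature map of the tensor-product kernel into an RKHS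
    {H : Type*} [NormedAddCommGroup H] [InnerProductSpace ℝ H] [CompleteSpace H]
    (φ : (∀ j, X j) → H)
    (hfeature : ∀ x y, (inner ℝ (φ x) (φ y) : ℝ) = ∏ j, k j (x j) (y j))
    -- an iid sequence with law μ
    {Ω : Type*} [MeasurableSpace Ω] (P : Measure Ω)
    (Xs : ℕ → Ω → (∀ j, X j))
    (hmeas : ∀ i, Measurable (Xs i))
    (hindep : iIndepFun Xs P)
    (μ : Measure (∀ j, X j)) [IsProbabilityMeasure μ]
    (hlaw : ∀ i, Measure.map (Xs i) P = μ)
    (hint1 : Integrable φ μ)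
    (hint2 : Integrable φ (Measure.pi fun j => μ.map fun x => x j)) :
    -- (a) h is symmetric
    (∀ (σ : Equiv.Perm (Fin (2 * (d + 1)))) (z : Fin (2 * (d + 1)) → ∀ j, X j),
        dhsicCore d k (z ∘ σ) = dhsicCore d k z)
    -- (b) h is continuous
    ∧ Continuous (dhsicCore d k)
    -- (c) h is bounded
    ∧ (∃ C : ℝ, ∀ z, |dhsicCore d k z| ≤ C)
    -- (d) θ_h = E h(X₁,…,X_{2(d+1)}) = dHSIC
    ∧ (∫ ω, dhsicCore d k (fun i => Xs (i : ℕ) ω) ∂P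
        = ‖(∫ x, φ x ∂(Measure.pi fun j => μ.map fun x => x j)) - ∫ x, φ x ∂μ‖ ^ 2)
    -- (e) the V-statistic of h equals the dHSIC estimator
    ∧ (∀ (n : ℕ) (x : Fin n → ∀ j, X j),
        ((n : ℝ) ^ (2 * (d + 1)))⁻¹ *
            (∑ f : Fin (2 * (d + 1)) → Fin n, dhsicCore d k (x ∘ f))
          = dhsicEstimator d n k x) := by
  choose C hC using hkbdd
  rw [dhsicCore_eq_symmetrize]
  refine ⟨fun σ z => symmetrize_comp_perm _ σ z,
    continuous_symmetrize (continuous_dhsicRawCore hkcont),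
    ⟨_, abs_symmetrize_le (abs_dhsicRawCore_le hC)⟩, ?_,
    fun n x => (vStatistic_symmetrize _ x).trans (vStatistic_dhsicRawCore k x)⟩
  have hterm := integrable_dhsicRawCore_and_integral_eq hfeature hindep hmeas hlaw hint1 hint2
  exact integral_symmetrize_comp (fun π => (hterm π).1) (fun π => (hterm π).2)

theorem dhsicCore_properties
    {d : ℕ} {X : Fin (d + 1) → Type*}
    [∀ j, MeasurableSpace (X j)] [∀ j, TopologicalSpace (X j)]
    (k : ∀ j, X j → X j → ℝ)
    (hkcont : ∀ j, Continuous (fun p : X j × X j => k j p.1 p.2))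
    (hkbdd : ∀ j, ∃ C : ℝ, ∀ a b, |k j a b| ≤ C)
    -- a feature map of the tensor-product kernel into an RKHS
    {H : Type*} [NormedAddCommGroup H] [InnerProductSpace ℝ H] [CompleteSpace H]
    (φ : (∀ j, X j) → H)
    (hfeature : ∀ x y, (inner ℝ (φ x) (φ y) : ℝ) = ∏ j, k j (x j) (y j))
    -- an iid sequence with law μ
    {Ω : Type*} [MeasurableSpace Ω] (P : Measure Ω) [IsProbabilityMeasure P]
    (Xs : ℕ → Ω → (∀ j, X j))
    (hmeas : ∀ i, Measurable (Xs i))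
    (hindep : iIndepFun Xs P)
    (μ : Measure (∀ j, X j)) [IsProbabilityMeasure μ]
    (hlaw : ∀ i, Measure.map (Xs i) P = μ)
    (hint1 : Integrable φ μ)
    (hint2 : Integrable φ (Measure.pi fun j => μ.map fun x => x j)) :
    -- (a) h is symmetric
    (∀ (σ : Equiv.Perm (Fin (2 * (d + 1)))) (z : Fin (2 * (d + 1)) → ∀ j, X j),
        dhsicCore d k (z ∘ σ) = dhsicCore d k z)
    -- (b) h is continuous
    ∧ Continuous (dhsicCore d k)
    -- (c) h is bounded
    ∧ (∃ C : ℝ, ∀ z, |dhsicCore d k z| ≤ C)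
    -- (d) θ_h = E h(X₁,…,X_{2(d+1)}) = dHSIC
    ∧ (∫ ω, dhsicCore d k (fun i => Xs (i : ℕ) ω) ∂P
        = ‖(∫ x, φ x ∂(Measure.pi fun j => μ.map fun x => x j)) - ∫ x, φ x ∂μ‖ ^ 2)
    -- (e) the V-statistic of h equals the dHSIC estimator
    ∧ (∀ (n : ℕ) (x : Fin n → ∀ j, X j),
        ((n : ℝ) ^ (2 * (d + 1)))⁻¹ *
            (∑ f : Fin (2 * (d + 1)) → Fin n, dhsicCore d k (x ∘ f))
          = dhsicEstimator d n k x) :=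
  dhsicCore_properties_general k hkcont hkbdd φ hfeature P Xs hmeas hindep μ hlaw hint1 hint2
end
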